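/- Let n ≥ 3 and let k > n/(n-2) be a positive integer. For F(r) = r^{2m}, ψ(s) = -sin^{2k}s, and f = F(r)ψ(s), define L = (Δf + 2nf)/(r^{2m-2} sin^{2k}s) where Δ is the Laplacian of the round metric on S^{n+1}. Then L = -2m(2m-1) - 2mn·r·cot r + 2k r²/sin²r - 2k(2k+n-2) r² cot²s / sin²r - 2n r². Moreover, if 2m-1 > π²k/2, then L < -(2m-1)² - 2k(2k+n-2) r² cot²s / sin²r < 0 for all 0 < r ≤ π/2, 0 < s < π; in particular Δf + 2nf < 0 there. -/

import Mathlib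

/-!
Both factors of `f = F(r)ψ(s)` are powers, and away from zeros the first and second derivatives
of `x ^ p` and `sin ^ p` are multiples of the function itself; so `Δf + 2nf` is
`r^{2m-2} sin^{2k}s` times an explicit expression, which is `L`.

For the inequality, `sin r ≥ 2r/π` gives `r²/sin²r ≤ π²/4`, so the only positive term
`2k r²/sin²r` of `L` is at most `π²k/2 < 2m - 1`, and `-2m(2m-1) + (2m-1) = -(2m-1)²`. The terms
`-2mn r cot r` and `-2nr²` are nonpositive because `cot r ≥ 0` on `(0, π/2]`.
-/

open Real

/-- The Laplace–Beltrami operator of the round metric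
`dr² + sin²r ds² + sin²r sin²s g_{S^{n-1}}` on `S^{n+1}`, acting on functions of `(r,s)`:
`Δf = ∂_r²f + (1/sin²r)∂_s²f + n cot r ∂_r f + (n-1)(cot s/sin²r) ∂_s f`. -/
noncomputable def lapRS (n : ℕ) (f : ℝ → ℝ → ℝ) (r s : ℝ) : ℝ :=
  deriv (fun r' => deriv (fun r'' => f r'' s) r') r
    + (1 / Real.sin r ^ 2) * deriv (fun s' => deriv (fun s'' => f r s'') s') s
    + n * (Real.cos r / Real.sin r) * deriv (fun r' => f r' s) r
    + ((n : ℝ) - 1) * (Real.cos s / Real.sin s) / Real.sin r ^ 2 * deriv (fun s' => f r s') s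

/-- `f = F(r)ψ(s)` with `F(r) = r^{2m}` and `ψ(s) = -sin^{2k}s`. -/
noncomputable def fmk (m k : ℕ) (r s : ℝ) : ℝ := -(r ^ (2 * m) * Real.sin s ^ (2 * k))

/-- `L = (Δf + 2nf)/(r^{2m-2} sin^{2k}s)`. -/
noncomputable def Lmk (n m k : ℕ) (r s : ℝ) : ℝ :=
  (lapRS n (fmk m k) r s + 2 * n * fmk m k r s) / (r ^ (2 * m - 2) * Real.sin s ^ (2 * k))

theorem lapRS_mul (n : ℕ) (F ψ : ℝ → ℝ) (r s : ℝ) :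
    lapRS n (fun r s => F r * ψ s) r s
      = deriv (deriv F) r * ψ s + F r * deriv (deriv ψ) s / sin r ^ 2
        + n * (cos r / sin r) * deriv F r * ψ s
        + (n - 1) * (cos s / sin s) / sin r ^ 2 * F r * deriv ψ s := by
  simp only [lapRS, deriv_mul_const_field', deriv_const_mul_field']
  ring

theorem deriv_pow_of_ne_zero (p : ℕ) {x : ℝ} (hx : x ≠ 0) :
    deriv (fun y => y ^ p) x = p / x * x ^ p := by
  rw [(hasDerivAt_pow p x).deriv]
  rcases p with _ | p
  · simp
  · rw [Nat.add_sub_cancel, pow_succ]; field_simp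

theorem deriv_deriv_pow_of_ne_zero (p : ℕ) {x : ℝ} (hx : x ≠ 0) :
    deriv (deriv fun y => y ^ p) x = p * (p - 1) / x ^ 2 * x ^ p := by
  have h := (hasDerivAt_pow (p - 1) x).const_mul (p : ℝ)
  rw [show (deriv fun y : ℝ => y ^ p) = fun y => (p : ℝ) * y ^ (p - 1) from
    funext fun y => (hasDerivAt_pow p y).deriv, h.deriv]
  rcases p with _ | _ | p
  · simp
  · simp
  · simp only [Nat.add_sub_cancel, Nat.cast_add, Nat.cast_one, pow_succ]; field_simp; ring

theorem deriv_sin_pow (p : ℕ) (t : ℝ) :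
    deriv (fun t => sin t ^ p) t = p * sin t ^ (p - 1) * cos t := by
  simp

theorem deriv_sin_pow_of_ne_zero (p : ℕ) {t : ℝ} (ht : sin t ≠ 0) :
    deriv (fun t => sin t ^ p) t = p * (cos t / sin t) * sin t ^ p := by
  rw [deriv_sin_pow]
  rcases p with _ | p
  · simp
  · rw [Nat.add_sub_cancel, pow_succ]; field_simp

theorem deriv_deriv_sin_pow_of_ne_zero (p : ℕ) {t : ℝ} (ht : sin t ≠ 0) :
    deriv (deriv fun t => sin t ^ p) t
      = (p * (p - 1) * (cos t / sin t) ^ 2 - p) * sin t ^ p := by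
  have h := (((hasDerivAt_sin t).fun_pow (p - 1)).const_mul (p : ℝ)).fun_mul (hasDerivAt_cos t)
  rw [show (deriv fun t => sin t ^ p) = fun t => p * sin t ^ (p - 1) * cos t from
    funext (deriv_sin_pow p), h.deriv]
  rcases p with _ | _ | p
  · simp
  · simp
  · simp only [Nat.add_sub_cancel, Nat.cast_add, Nat.cast_one, pow_succ]; field_simp; ring

theorem fmk_eq_mul (m k : ℕ) : fmk m k = fun r s => r ^ (2 * m) * -sin s ^ (2 * k) := by
  ext r s
  rw [fmk, mul_neg]

theorem Lmk_eq (n : ℕ) {m : ℕ} (k : ℕ) (hm : 1 ≤ m) {r s : ℝ} (hr : r ≠ 0) (hsr : sin r ≠ 0)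
    (hss : sin s ≠ 0) :
    Lmk n m k r s
      = -(2 * m) * (2 * m - 1) - 2 * m * n * r * (cos r / sin r) + 2 * k * r ^ 2 / sin r ^ 2
        - 2 * k * (2 * k + n - 2) * r ^ 2 * (cos s / sin s) ^ 2 / sin r ^ 2 - 2 * n * r ^ 2 := by
  have hpow : r ^ (2 * m) = r ^ (2 * m - 2) * r ^ 2 := by
    rw [← pow_add, Nat.sub_add_cancel (by omega)]
  simp only [Lmk, fmk_eq_mul, lapRS_mul, deriv.fun_neg']
  rw [deriv_pow_of_ne_zero _ hr,
    deriv_deriv_pow_of_ne_zero _ hr, deriv_sin_pow_of_ne_zero _ hss,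
    deriv_deriv_sin_pow_of_ne_zero _ hss, hpow]
  field_simp
  push_cast
  ring

theorem sq_div_sin_sq_le {r : ℝ} (hr : 0 < r) (hr' : r ≤ π / 2) :
    r ^ 2 / sin r ^ 2 ≤ π ^ 2 / 4 := by
  have hsin : 2 / π * r ≤ sin r := mul_le_sin hr.le hr'
  have hr_le : r ≤ π / 2 * sin r := by
    calc r = π / 2 * (2 / π * r) := by field_simp
      _ ≤ π / 2 * sin r := by gcongr
  have hsin_pos : 0 < sin r := sin_pos_of_pos_of_lt_pi hr (by linarith [pi_pos])
  rw [div_le_iff₀ (by positivity)]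
  calc r ^ 2 ≤ (π / 2 * sin r) ^ 2 := pow_le_pow_left₀ hr.le hr_le 2
    _ = π ^ 2 / 4 * sin r ^ 2 := by ring

theorem two_mul_mul_sq_div_sin_sq_lt {k : ℕ} {c r : ℝ} (hr : 0 < r) (hr' : r ≤ π / 2)
    (hk : π ^ 2 * k / 2 < c) : 2 * k * r ^ 2 / sin r ^ 2 < c :=
  calc 2 * k * r ^ 2 / sin r ^ 2 = 2 * k * (r ^ 2 / sin r ^ 2) := by ring
    _ ≤ 2 * k * (π ^ 2 / 4) := by
        gcongr ?_ * ?_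
        exact sq_div_sin_sq_le hr hr'
    _ < c := by linarith

theorem two_mul_mul_two_mul_add_sub_two_nonneg (n k : ℕ) :
    (0 : ℝ) ≤ 2 * k * (2 * k + n - 2) := by
  rcases k with _ | k
  · simp
  · push_cast; ring_nf; positivity

theorem stmt12_general (n m k : ℕ) (hm : 1 ≤ m)
    (r s : ℝ) (hr : 0 < r) (hr' : r ≤ π / 2) (hs : 0 < s) (hs' : s < π) :
    Lmk n m k r s
      = -(2 * m) * (2 * m - 1) - 2 * m * n * r * (Real.cos r / Real.sin r)
        + 2 * k * r ^ 2 / Real.sin r ^ 2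
        - 2 * k * (2 * k + n - 2) * r ^ 2 * (Real.cos s / Real.sin s) ^ 2 / Real.sin r ^ 2
        - 2 * n * r ^ 2 ∧
    ((π ^ 2 * k / 2 < 2 * m - 1) →
      (Lmk n m k r s
          < -(2 * (m : ℝ) - 1) ^ 2
            - 2 * k * (2 * k + n - 2) * r ^ 2 * (Real.cos s / Real.sin s) ^ 2
              / Real.sin r ^ 2 ∧
        -(2 * (m : ℝ) - 1) ^ 2
            - 2 * k * (2 * k + n - 2) * r ^ 2 * (Real.cos s / Real.sin s) ^ 2
              / Real.sin r ^ 2 < 0 ∧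
        lapRS n (fmk m k) r s + 2 * n * fmk m k r s < 0)) := by
  have hsr : 0 < sin r := sin_pos_of_pos_of_lt_pi hr (by linarith [pi_pos])
  have hss : 0 < sin s := sin_pos_of_pos_of_lt_pi hs hs'
  have hL := Lmk_eq n k hm hr.ne' hsr.ne' hss.ne'
  refine ⟨hL, fun hmk => ?_⟩
  have hcot : 0 ≤ 2 * m * n * r * (cos r / sin r) :=
    mul_nonneg (by positivity) (div_nonneg (cos_nonneg_of_mem_Icc ⟨by linarith, hr'⟩) hsr.le)
  have hk := two_mul_mul_sq_div_sin_sq_lt hr hr' hmk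
  have hlt : Lmk n m k r s < -(2 * (m : ℝ) - 1) ^ 2
      - 2 * k * (2 * k + n - 2) * r ^ 2 * (cos s / sin s) ^ 2 / sin r ^ 2 := by
    have : 0 ≤ 2 * n * r ^ 2 := by positivity
    rw [hL]; linarith
  have hneg : -(2 * (m : ℝ) - 1) ^ 2
      - 2 * k * (2 * k + n - 2) * r ^ 2 * (cos s / sin s) ^ 2 / sin r ^ 2 < 0 := by
    have : (1 : ℝ) ≤ m := by exact_mod_cast hm
    have : 0 < (2 * (m : ℝ) - 1) ^ 2 := pow_pos (by linarith) 2
    have := two_mul_mul_two_mul_add_sub_two_nonneg n k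
    have : 0 ≤ 2 * k * (2 * k + n - 2) * r ^ 2 * (cos s / sin s) ^ 2 / sin r ^ 2 := by positivity
    linarith
  refine ⟨hlt, hneg, ?_⟩
  have hden : 0 < r ^ (2 * m - 2) * sin s ^ (2 * k) := by positivity
  have hL0 := hlt.trans hneg
  rwa [Lmk, div_lt_iff₀ hden, zero_mul] at hL0

/-- For `n ≥ 3`, `k > n/(n-2)` a positive integer, `m ≥ 1`:
`L = -2m(2m-1) - 2mn r cot r + 2k r²/sin²r - 2k(2k+n-2) r² cot²s/sin²r - 2n r²`
on `0 < r ≤ π/2`, `0 < s < π`; moreover if `2m - 1 > π²k/2` then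
`L < -(2m-1)² - 2k(2k+n-2) r² cot²s / sin²r < 0`, and in particular `Δf + 2nf < 0`. -/
theorem stmt12 (n m k : ℕ) (hn : 3 ≤ n) (hk : ((n : ℝ) / (n - 2)) < k) (hm : 1 ≤ m)
    (r s : ℝ) (hr : 0 < r) (hr' : r ≤ π / 2) (hs : 0 < s) (hs' : s < π) :
    Lmk n m k r s
      = -(2 * m) * (2 * m - 1) - 2 * m * n * r * (Real.cos r / Real.sin r)
        + 2 * k * r ^ 2 / Real.sin r ^ 2
        - 2 * k * (2 * k + n - 2) * r ^ 2 * (Real.cos s / Real.sin s) ^ 2 / Real.sin r ^ 2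
        - 2 * n * r ^ 2 ∧
    ((π ^ 2 * k / 2 < 2 * m - 1) →
      (Lmk n m k r s
          < -(2 * (m : ℝ) - 1) ^ 2
            - 2 * k * (2 * k + n - 2) * r ^ 2 * (Real.cos s / Real.sin s) ^ 2
              / Real.sin r ^ 2 ∧
        -(2 * (m : ℝ) - 1) ^ 2
            - 2 * k * (2 * k + n - 2) * r ^ 2 * (Real.cos s / Real.sin s) ^ 2
              / Real.sin r ^ 2 < 0 ∧
        lapRS n (fmk m k) r s + 2 * n * fmk m k r s < 0)) :=
  stmt12_general n m k hm r s hr hr' hs hs'
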